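/- Entanglement of the heralded satellite-to-ground state: let f_S ∈ [0,1], η₁, η₂, n̄₁, n̄₂ ∈ [0,1], and for i ∈ {1,2} define x_i := (1−n̄_i)η_i + (n̄_i/2)((1−2η_i)² + η_i²), y_i := (n̄_i/2)(1−η_i)², z_i := (1−n̄_i)η_i − n̄_iη_i(1−2η_i), and set a := x₁x₂ + y₁y₂, b := z₁z₂, c := x₁y₂ + y₁x₂; assume a + c > 0. Let σ⁰ be the two-qubit Bell-diagonal density matrix σ⁰ := (1/(a+c))·[ ½(f_S(a+b) + ((1−f_S)/3)(a+2c−b))·Φ⁺ + ½(f_S(a−b) + ((1−f_S)/3)(a+2c+b))·Φ⁻ + ½(f_S c + ((1−f_S)/3)(2a+c))·Ψ⁺ + ½(f_S c + ((1−f_S)/3)(2a+c))·Ψ⁻ ]. Then σ⁰ is entangled, i.e., σ⁰ does not lie in the convex hull of the set of product states {ρ ⊗ τ : ρ, τ 2×2 density matrices}, if and only if f_S > 1/2 and 2(f_S−1)a + (4f_S−1)b − (1+2f_S)c > 0. In particular, ⟨Φ⁺|σ⁰|Φ⁺⟩ > 1/2 if and only if 2(f_S−1)a + (4f_S−1)b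 − (1+2f_S)c > 0. -/

import Mathlib

open Matrix BigOperators
open scoped Kronecker ComplexOrder

noncomputable section

/-- Bell state vector `|Φ⁺⟩`. -/
def phiPlus : Fin 2 × Fin 2 → ℂ :=
  fun k => if k = (0, 0) ∨ k = (1, 1) then ((Real.sqrt 2 : ℂ))⁻¹ else 0

/-- Bell state vector `|Φ⁻⟩`. -/
def phiMinus : Fin 2 × Fin 2 → ℂ :=
  fun k => if k = (0, 0) then ((Real.sqrt 2 : ℂ))⁻¹
    else if k = (1, 1) then -((Real.sqrt 2 : ℂ))⁻¹ else 0

/-- Bell state vector `|Ψ⁺⟩`. -/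
def psiPlus : Fin 2 × Fin 2 → ℂ :=
  fun k => if k = (0, 1) ∨ k = (1, 0) then ((Real.sqrt 2 : ℂ))⁻¹ else 0

/-- Bell state vector `|Ψ⁻⟩`. -/
def psiMinus : Fin 2 × Fin 2 → ℂ :=
  fun k => if k = (0, 1) then ((Real.sqrt 2 : ℂ))⁻¹
    else if k = (1, 0) then -((Real.sqrt 2 : ℂ))⁻¹ else 0

/-- Rank-one projector `|ψ⟩⟨ψ|`. -/
def projv {m' : Type*} (ψ : m' → ℂ) : Matrix m' m' ℂ := Matrix.vecMulVec ψ (star ψ)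

/-- A density matrix: positive semidefinite with unit trace. -/
def IsDensityMatrix {m' : Type*} [Fintype m'] (ρ : Matrix m' m' ℂ) : Prop :=
  ρ.PosSemidef ∧ ρ.trace = 1

/-- A two-qubit state is separable if it lies in the convex hull of the product states. -/
def Separable (σ : Matrix (Fin 2 × Fin 2) (Fin 2 × Fin 2) ℂ) : Prop :=
  σ ∈ convexHull ℝ {M : Matrix (Fin 2 × Fin 2) (Fin 2 × Fin 2) ℂ |
    ∃ ρ τ : Matrix (Fin 2) (Fin 2) ℂ,
      IsDensityMatrix ρ ∧ IsDensityMatrix τ ∧ M = ρ ⊗ₖ τ}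

/-- Satellite-to-ground loss/noise coefficient `x_i`. -/
def xco (nb η : ℝ) : ℝ := (1 - nb) * η + (nb / 2) * ((1 - 2 * η) ^ 2 + η ^ 2)

/-- Satellite-to-ground loss/noise coefficient `y_i`. -/
def yco (nb η : ℝ) : ℝ := (nb / 2) * (1 - η) ^ 2

/-- Satellite-to-ground loss/noise coefficient `z_i`. -/
def zco (nb η : ℝ) : ℝ := (1 - nb) * η - nb * η * (1 - 2 * η)

/-- `a = x₁x₂ + y₁y₂`. -/
def aco (η1 η2 n1 n2 : ℝ) : ℝ := xco n1 η1 * xco n2 η2 + yco n1 η1 * yco n2 η2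

/-- `b = z₁z₂`. -/
def bco (η1 η2 n1 n2 : ℝ) : ℝ := zco n1 η1 * zco n2 η2

/-- `c = x₁y₂ + y₁x₂`. -/
def cco (η1 η2 n1 n2 : ℝ) : ℝ := xco n1 η1 * yco n2 η2 + yco n1 η1 * xco n2 η2

/-- The normalized Bell-diagonal state `σ⁰` of a heralded satellite-to-ground
elementary link. -/
def sigma0 (fS η1 η2 n1 n2 : ℝ) : Matrix (Fin 2 × Fin 2) (Fin 2 × Fin 2) ℂ :=
  (((aco η1 η2 n1 n2 + cco η1 η2 n1 n2)⁻¹ : ℝ) : ℂ) •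
    ((((1 / 2) * (fS * (aco η1 η2 n1 n2 + bco η1 η2 n1 n2)
          + ((1 - fS) / 3) * (aco η1 η2 n1 n2 + 2 * cco η1 η2 n1 n2 - bco η1 η2 n1 n2)) : ℝ) : ℂ)
        • projv phiPlus
      + (((1 / 2) * (fS * (aco η1 η2 n1 n2 - bco η1 η2 n1 n2)
          + ((1 - fS) / 3) * (aco η1 η2 n1 n2 + 2 * cco η1 η2 n1 n2 + bco η1 η2 n1 n2)) : ℝ) : ℂ)
        • projv phiMinus
      + (((1 / 2) * (fS * cco η1 η2 n1 n2
          + ((1 - fS) / 3) * (2 * aco η1 η2 n1 n2 + cco η1 η2 n1 n2)) : ℝ) : ℂ)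
        • projv psiPlus
      + (((1 / 2) * (fS * cco η1 η2 n1 n2
          + ((1 - fS) / 3) * (2 * aco η1 η2 n1 n2 + cco η1 η2 n1 n2)) : ℝ) : ℂ)
        • projv psiMinus)

/-- The fidelity `⟨ψ|ρ|ψ⟩` of a state `ρ` with a pure state `|ψ⟩`. -/
def fidTo {m' : Type*} [Fintype m'] (ψ : m' → ℂ) (ρ : Matrix m' m' ℂ) : ℂ :=
  ∑ i, ∑ j, (starRingEnd ℂ) (ψ i) * ρ i j * ψ j

/-! ### Auxiliary material -/

lemma c2_mul_c2 : ((Real.sqrt 2 : ℂ))⁻¹ * ((Real.sqrt 2 : ℂ))⁻¹ = (2 : ℂ)⁻¹ := by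
  rw [← mul_inv]; norm_cast
  rw [Real.mul_self_sqrt (by norm_num)]; norm_num

lemma conj_c2 : (starRingEnd ℂ) ((Real.sqrt 2 : ℂ))⁻¹ = ((Real.sqrt 2 : ℂ))⁻¹ := by
  rw [map_inv₀, Complex.conj_ofReal]

lemma projv_posSemidef {m' : Type*} [Fintype m'] [DecidableEq m'] (ψ : m' → ℂ) :
    (projv ψ).PosSemidef := by
  refine Matrix.PosSemidef.of_dotProduct_mulVec_nonneg ?_ ?_
  · ext i j
    simp [projv, Matrix.conjTranspose_apply, Matrix.vecMulVec_apply, mul_comm]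
  · intro x
    have : dotProduct (star x) (projv ψ *ᵥ x)
        = (starRingEnd ℂ) (∑ j, (starRingEnd ℂ) (ψ j) * x j) * (∑ j, (starRingEnd ℂ) (ψ j) * x j) := by
      simp only [dotProduct, Matrix.mulVec, projv, Matrix.vecMulVec_apply, Pi.star_apply,
        map_sum, _root_.map_mul, RingHom.comp_apply, Complex.conj_conj]
      rw [Finset.sum_mul]
      congr 1; ext i
      rw [Finset.mul_sum, Finset.mul_sum]
      congr 1; ext j
      simp [RCLike.star_def]
      ring
    rw [this, Complex.conj_mul']
    positivity

lemma trace_projv {m' : Type*} [Fintype m'] (ψ : m' → ℂ) :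
    (projv ψ).trace = ∑ i, ψ i * (starRingEnd ℂ) (ψ i) := by
  simp [Matrix.trace, projv, Matrix.vecMulVec_apply, Matrix.diag, RCLike.star_def]

lemma isDM_projv {m' : Type*} [Fintype m'] [DecidableEq m'] (ψ : m' → ℂ)
    (h : ∑ i, ψ i * (starRingEnd ℂ) (ψ i) = 1) : IsDensityMatrix (projv ψ) :=
  ⟨projv_posSemidef ψ, by rw [trace_projv, h]⟩

/-! #### Fidelity basics -/

lemma fidTo_add {m' : Type*} [Fintype m'] (ψ : m' → ℂ) (M N : Matrix m' m' ℂ) :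
    fidTo ψ (M + N) = fidTo ψ M + fidTo ψ N := by
  simp [fidTo, mul_add, add_mul, Finset.sum_add_distrib]

lemma fidTo_smul {m' : Type*} [Fintype m'] (ψ : m' → ℂ) (r : ℂ) (M : Matrix m' m' ℂ) :
    fidTo ψ (r • M) = r * fidTo ψ M := by
  simp [fidTo, Finset.mul_sum]
  congr 1; ext i; congr 1; ext j; ring

lemma fidTo_real_smul {m' : Type*} [Fintype m'] (ψ : m' → ℂ) (r : ℝ) (M : Matrix m' m' ℂ) :
    fidTo ψ (r • M) = (r : ℂ) * fidTo ψ M := by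
  simp only [fidTo, Finset.mul_sum]
  congr 1; ext i; congr 1; ext j
  simp [Matrix.smul_apply, Complex.real_smul]
  ring

lemma fidTo_projv {m' : Type*} [Fintype m'] (ψ φ : m' → ℂ) :
    fidTo ψ (projv φ) =
      (∑ i, (starRingEnd ℂ) (ψ i) * φ i) * (∑ j, (starRingEnd ℂ) (φ j) * ψ j) := by
  rw [fidTo, Finset.sum_mul_sum]
  congr 1; ext i; congr 1; ext j
  simp [projv, Matrix.vecMulVec_apply]
  ring

lemma inner_pp : (∑ i, (starRingEnd ℂ) (phiPlus i) * phiPlus i) = 1 := by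
  rw [Fintype.sum_prod_type]
  simp [Fin.sum_univ_two, phiPlus, Prod.ext_iff, conj_c2, c2_mul_c2]
  norm_num

lemma inner_pm : (∑ i, (starRingEnd ℂ) (phiPlus i) * phiMinus i) = 0 := by
  rw [Fintype.sum_prod_type]
  simp [Fin.sum_univ_two, phiPlus, phiMinus, Prod.ext_iff, conj_c2, c2_mul_c2]

lemma inner_pq : (∑ i, (starRingEnd ℂ) (phiPlus i) * psiPlus i) = 0 := by
  rw [Fintype.sum_prod_type]
  simp [Fin.sum_univ_two, phiPlus, psiPlus, Prod.ext_iff, conj_c2, c2_mul_c2]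

lemma inner_pr : (∑ i, (starRingEnd ℂ) (phiPlus i) * psiMinus i) = 0 := by
  rw [Fintype.sum_prod_type]
  simp [Fin.sum_univ_two, phiPlus, psiMinus, Prod.ext_iff, conj_c2, c2_mul_c2]

lemma inner_mp : (∑ i, (starRingEnd ℂ) (phiMinus i) * phiPlus i) = 0 := by
  rw [Fintype.sum_prod_type]
  simp [Fin.sum_univ_two, phiPlus, phiMinus, Prod.ext_iff, conj_c2, c2_mul_c2]

lemma inner_qp : (∑ i, (starRingEnd ℂ) (psiPlus i) * phiPlus i) = 0 := by
  rw [Fintype.sum_prod_type]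
  simp [Fin.sum_univ_two, phiPlus, psiPlus, Prod.ext_iff, conj_c2, c2_mul_c2]

lemma inner_rp : (∑ i, (starRingEnd ℂ) (psiMinus i) * phiPlus i) = 0 := by
  rw [Fintype.sum_prod_type]
  simp [Fin.sum_univ_two, phiPlus, psiMinus, Prod.ext_iff, conj_c2, c2_mul_c2]

lemma fidTo_phiPlus_eq (M : Matrix (Fin 2 × Fin 2) (Fin 2 × Fin 2) ℂ) :
    fidTo phiPlus M =
      (2:ℂ)⁻¹ * (M (0,0) (0,0) + M (0,0) (1,1) + M (1,1) (0,0) + M (1,1) (1,1)) := by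
  rw [fidTo, Fintype.sum_prod_type]
  simp only [Fin.sum_univ_two, Fintype.sum_prod_type, phiPlus, Prod.ext_iff, conj_c2]
  norm_num [Prod.ext_iff, Fin.ext_iff]
  ring_nf
  rw [pow_two, c2_mul_c2]
  ring

/-! #### Two-by-two density matrices -/

lemma quad22 (ρ : Matrix (Fin 2) (Fin 2) ℂ) (a b : ℂ) :
    dotProduct (star ![a, b]) (ρ *ᵥ ![a, b]) =
      (starRingEnd ℂ) a * ρ 0 0 * a + (starRingEnd ℂ) a * ρ 0 1 * b
        + (starRingEnd ℂ) b * ρ 1 0 * a + (starRingEnd ℂ) b * ρ 1 1 * b := by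
  simp [dotProduct, Matrix.mulVec, Fin.sum_univ_two, RCLike.star_def]
  ring

lemma dm22_facts (ρ : Matrix (Fin 2) (Fin 2) ℂ) (h : IsDensityMatrix ρ) :
    ρ 0 0 = ((ρ 0 0).re : ℂ) ∧ ρ 1 1 = ((ρ 1 1).re : ℂ) ∧
    0 ≤ (ρ 0 0).re ∧ 0 ≤ (ρ 1 1).re ∧ (ρ 0 0).re + (ρ 1 1).re = 1 ∧
    ρ 1 0 = (starRingEnd ℂ) (ρ 0 1) ∧
    Complex.normSq (ρ 0 1) ≤ (ρ 0 0).re * (ρ 1 1).re := by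
  obtain ⟨hps, htr⟩ := h
  have hherm := hps.1
  have hpos := hps.dotProduct_mulVec_nonneg
  have h10 : ρ 1 0 = (starRingEnd ℂ) (ρ 0 1) := by
    conv_lhs => rw [← hherm]
    simp [Matrix.conjTranspose_apply, RCLike.star_def]
  have hd : ∀ i, ρ i i = ((ρ i i).re : ℂ) := by
    intro i
    have : (starRingEnd ℂ) (ρ i i) = ρ i i := by
      conv_rhs => rw [← hherm]
      simp [Matrix.conjTranspose_apply, RCLike.star_def]
    exact (Complex.conj_eq_iff_re.mp this).symm
  have hnn : ∀ i, 0 ≤ (ρ i i).re := by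
    intro i
    have := hpos (Pi.single i 1)
    have e : dotProduct (star (Pi.single i (1:ℂ))) (ρ *ᵥ Pi.single i 1) = ρ i i := by
      simp [dotProduct, Matrix.mulVec, Pi.single_apply, Finset.sum_ite_eq,
        RCLike.star_def]
    rw [e] at this
    exact (Complex.le_def.mp this).1
  have htr' : (ρ 0 0).re + (ρ 1 1).re = 1 := by
    have : ρ.trace = ρ 0 0 + ρ 1 1 := by simp [Matrix.trace, Fin.sum_univ_two]
    rw [this] at htr
    have := congrArg Complex.re htr
    simpa using this
  refine ⟨hd 0, hd 1, hnn 0, hnn 1, htr', h10, ?_⟩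
  set r0 := (ρ 0 0).re
  set r1 := (ρ 1 1).re
  set n := Complex.normSq (ρ 0 1) with hn
  have hnnn : 0 ≤ n := Complex.normSq_nonneg _
  have key : ∀ t : ℝ, 0 ≤ r0 * t ^ 2 - 2 * n * t + r1 * n := by
    intro t
    have hq := hpos ![(t : ℂ), -(starRingEnd ℂ) (ρ 0 1)]
    rw [quad22] at hq
    have : (starRingEnd ℂ) (t:ℂ) * ρ 0 0 * t + (starRingEnd ℂ) (t:ℂ) * ρ 0 1 * (-(starRingEnd ℂ) (ρ 0 1))
        + (starRingEnd ℂ) (-(starRingEnd ℂ) (ρ 0 1)) * ρ 1 0 * t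
        + (starRingEnd ℂ) (-(starRingEnd ℂ) (ρ 0 1)) * ρ 1 1 * (-(starRingEnd ℂ) (ρ 0 1))
        = ((r0 * t ^ 2 - 2 * n * t + r1 * n : ℝ) : ℂ) := by
      rw [h10, hd 0, hd 1]
      simp only [map_neg, Complex.conj_conj, Complex.conj_ofReal]
      push_cast
      rw [hn, ← Complex.normSq_conj, ← Complex.mul_conj]
      simp only [Complex.conj_conj]
      ring
    rw [this] at hq
    exact (Complex.zero_le_real).mp hq
  have k1 := key r1
  have k2 := key n
  rcases eq_or_lt_of_le hnnn with h0 | hpos'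
  · rw [← h0]; exact mul_nonneg (hnn 0) (hnn 1)
  · rcases eq_or_lt_of_le (hnn 1) with hr1 | hr1
    · nlinarith [k2, mul_pos hpos' hpos']
    · nlinarith [k1]

lemma prod_fid_le (ρ τ : Matrix (Fin 2) (Fin 2) ℂ)
    (hρ : IsDensityMatrix ρ) (hτ : IsDensityMatrix τ) :
    (fidTo phiPlus (ρ ⊗ₖ τ)).re ≤ 1 / 2 := by
  obtain ⟨h00, h11, hr0, hr1, htr, h10, hdet⟩ := dm22_facts ρ hρ
  obtain ⟨g00, g11, hs0, hs1, gtr, g10, gdet⟩ := dm22_facts τ hτ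
  rw [fidTo_phiPlus_eq]
  simp only [Matrix.kroneckerMap_apply]
  rw [h00, h11, g00, g11, h10, g10]
  set r0 := (ρ 0 0).re; set r1 := (ρ 1 1).re
  set s0 := (τ 0 0).re; set s1 := (τ 1 1).re
  set x := (ρ 0 1).re; set y := (ρ 0 1).im
  set u := (τ 0 1).re; set v := (τ 0 1).im
  have hz : ρ 0 1 = Complex.mk x y := rfl
  have hw : τ 0 1 = Complex.mk u v := rfl
  rw [hz, hw]
  have hre : ((2:ℂ)⁻¹ * ((r0:ℂ) * s0 + Complex.mk x y * Complex.mk u v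
      + (starRingEnd ℂ) (Complex.mk x y) * (starRingEnd ℂ) (Complex.mk u v)
      + (r1:ℂ) * s1)).re = 2⁻¹ * (r0 * s0 + r1 * s1 + 2 * (x * u - y * v)) := by
    simp [Complex.ext_iff, Complex.mul_re, Complex.mul_im, Complex.add_re]
    ring
  rw [hre]
  have hdet' : x ^ 2 + y ^ 2 ≤ r0 * r1 := by
    rw [hz, Complex.normSq_mk] at hdet; nlinarith [hdet]
  have gdet' : u ^ 2 + v ^ 2 ≤ s0 * s1 := by
    rw [hw, Complex.normSq_mk] at gdet; nlinarith [gdet]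
  have ht : 4 * (x * u - y * v) ^ 2 ≤ (r0 * s1 + r1 * s0) ^ 2 := by
    nlinarith [sq_nonneg (x * v + y * u), sq_nonneg (r0 * s1 - r1 * s0),
      mul_le_mul hdet' gdet' (by positivity) (mul_nonneg hr0 hr1)]
  have hS : 0 ≤ r0 * s1 + r1 * s0 := by positivity
  have hfin : 2 * (x * u - y * v) ≤ r0 * s1 + r1 * s0 := by nlinarith [ht, hS]
  nlinarith [hfin]

lemma sep_fid_le (σ : Matrix (Fin 2 × Fin 2) (Fin 2 × Fin 2) ℂ) (h : Separable σ) :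
    (fidTo phiPlus σ).re ≤ 1 / 2 := by
  have hlin : IsLinearMap ℝ
      (fun M : Matrix (Fin 2 × Fin 2) (Fin 2 × Fin 2) ℂ => (fidTo phiPlus M).re) := by
    constructor
    · intro M N; rw [fidTo_add, Complex.add_re]
    · intro c M
      rw [fidTo_real_smul]
      simp [Complex.re_ofReal_mul]
  have hsub : {M : Matrix (Fin 2 × Fin 2) (Fin 2 × Fin 2) ℂ |
      ∃ ρ τ : Matrix (Fin 2) (Fin 2) ℂ,
        IsDensityMatrix ρ ∧ IsDensityMatrix τ ∧ M = ρ ⊗ₖ τ} ⊆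
      {M | (fidTo phiPlus M).re ≤ 1 / 2} := by
    rintro M ⟨ρ, τ, hρ, hτ, rfl⟩
    exact prod_fid_le ρ τ hρ hτ
  exact convexHull_min hsub (convex_halfSpace_le hlin (1 / 2)) h

/-! #### Real-coefficient algebra -/

lemma zco_eq (nb η : ℝ) : zco nb η = xco nb η - yco nb η := by
  simp only [zco, xco, yco]; ring

lemma bco_eq (η1 η2 n1 n2 : ℝ) :
    bco η1 η2 n1 n2 = aco η1 η2 n1 n2 - cco η1 η2 n1 n2 := by
  simp only [bco, aco, cco, zco_eq]; ring

lemma xco_nonneg {nb η : ℝ} (hn : 0 ≤ nb ∧ nb ≤ 1) (hη : 0 ≤ η ∧ η ≤ 1) :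
    0 ≤ xco nb η := by
  simp only [xco]
  nlinarith [mul_nonneg (by linarith [hn.2] : (0:ℝ) ≤ 1 - nb) hη.1,
    sq_nonneg (1 - 2*η), sq_nonneg η, hn.1]

lemma yco_nonneg {nb η : ℝ} (hn : 0 ≤ nb ∧ nb ≤ 1) (hη : 0 ≤ η ∧ η ≤ 1) :
    0 ≤ yco nb η := by
  simp only [yco]
  nlinarith [sq_nonneg (1 - η), hn.1]

lemma two_xco_sub_yco {nb η : ℝ} (hn : 0 ≤ nb ∧ nb ≤ 1) (hη : 0 ≤ η ∧ η ≤ 1) :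
    0 ≤ 2 * xco nb η - yco nb η := by
  simp only [xco, yco]
  nlinarith [mul_nonneg (by linarith [hn.2] : (0:ℝ) ≤ 1 - nb) hη.1,
    mul_nonneg hn.1 (sq_nonneg (3*η - 1))]

lemma aco_nonneg {η1 η2 n1 n2 : ℝ} (hη1 : 0 ≤ η1 ∧ η1 ≤ 1) (hη2 : 0 ≤ η2 ∧ η2 ≤ 1)
    (hn1 : 0 ≤ n1 ∧ n1 ≤ 1) (hn2 : 0 ≤ n2 ∧ n2 ≤ 1) : 0 ≤ aco η1 η2 n1 n2 := by
  simp only [aco]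
  have := xco_nonneg hn1 hη1; have := xco_nonneg hn2 hη2
  have := yco_nonneg hn1 hη1; have := yco_nonneg hn2 hη2
  nlinarith

lemma cco_nonneg {η1 η2 n1 n2 : ℝ} (hη1 : 0 ≤ η1 ∧ η1 ≤ 1) (hη2 : 0 ≤ η2 ∧ η2 ≤ 1)
    (hn1 : 0 ≤ n1 ∧ n1 ≤ 1) (hn2 : 0 ≤ n2 ∧ n2 ≤ 1) : 0 ≤ cco η1 η2 n1 n2 := by
  simp only [cco]
  have := xco_nonneg hn1 hη1; have := xco_nonneg hn2 hη2
  have := yco_nonneg hn1 hη1; have := yco_nonneg hn2 hη2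
  nlinarith

lemma cco_le_two_aco {η1 η2 n1 n2 : ℝ} (hη1 : 0 ≤ η1 ∧ η1 ≤ 1) (hη2 : 0 ≤ η2 ∧ η2 ≤ 1)
    (hn1 : 0 ≤ n1 ∧ n1 ≤ 1) (hn2 : 0 ≤ n2 ∧ n2 ≤ 1) :
    cco η1 η2 n1 n2 ≤ 2 * aco η1 η2 n1 n2 := by
  simp only [aco, cco]
  have h1 := two_xco_sub_yco hn1 hη1
  have h2 := two_xco_sub_yco hn2 hη2
  have hy1 := yco_nonneg hn1 hη1
  have hy2 := yco_nonneg hn2 hη2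
  nlinarith [mul_nonneg h1 h2, mul_nonneg hy1 hy2]

/-! #### The product-state vectors -/

def b0 : Fin 2 → ℂ := ![1, 0]
def b1 : Fin 2 → ℂ := ![0, 1]
def wp : Fin 2 → ℂ := ![1, 1]
def wm : Fin 2 → ℂ := ![1, -1]
def jp : Fin 2 → ℂ := ![1, Complex.I]
def jm : Fin 2 → ℂ := ![1, -Complex.I]
def up : Fin 2 → ℂ := ((Real.sqrt 2 : ℂ))⁻¹ • wp
def um : Fin 2 → ℂ := ((Real.sqrt 2 : ℂ))⁻¹ • wm
def vp : Fin 2 → ℂ := ((Real.sqrt 2 : ℂ))⁻¹ • jp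
def vm : Fin 2 → ℂ := ((Real.sqrt 2 : ℂ))⁻¹ • jm

lemma dm_b0 : IsDensityMatrix (projv b0) := by
  apply isDM_projv; simp [b0, Fin.sum_univ_two]
lemma dm_b1 : IsDensityMatrix (projv b1) := by
  apply isDM_projv; simp [b1, Fin.sum_univ_two]
lemma dm_up : IsDensityMatrix (projv up) := by
  apply isDM_projv
  simp [up, wp, Fin.sum_univ_two, conj_c2, c2_mul_c2]
  norm_num
lemma dm_um : IsDensityMatrix (projv um) := by
  apply isDM_projv
  simp [um, wm, Fin.sum_univ_two, conj_c2, c2_mul_c2]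
  norm_num
lemma dm_vp : IsDensityMatrix (projv vp) := by
  apply isDM_projv
  simp [vp, jp, Fin.sum_univ_two, conj_c2, c2_mul_c2]
  ring_nf
  simp [Complex.I_sq, c2_mul_c2, pow_two]
  norm_num
lemma dm_vm : IsDensityMatrix (projv vm) := by
  apply isDM_projv
  simp [vm, jm, Fin.sum_univ_two, conj_c2, c2_mul_c2]
  ring_nf
  simp [Complex.I_sq, c2_mul_c2, pow_two]
  norm_num

lemma projv_smul {m' : Type*} (a : ℂ) (ψ : m' → ℂ) :
    projv (a • ψ) = (a * (starRingEnd ℂ) a) • projv ψ := by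
  ext i j
  simp [projv, Matrix.vecMulVec_apply, RCLike.star_def]
  ring

lemma projv_up : projv up = (2⁻¹ : ℂ) • projv wp := by
  rw [up, projv_smul, conj_c2, c2_mul_c2]
lemma projv_um : projv um = (2⁻¹ : ℂ) • projv wm := by
  rw [um, projv_smul, conj_c2, c2_mul_c2]
lemma projv_vp : projv vp = (2⁻¹ : ℂ) • projv jp := by
  rw [vp, projv_smul, conj_c2, c2_mul_c2]
lemma projv_vm : projv vm = (2⁻¹ : ℂ) • projv jm := by
  rw [vm, projv_smul, conj_c2, c2_mul_c2]

def Phi0 : Fin 2 × Fin 2 → ℂ := fun k => if k = (0, 0) ∨ k = (1, 1) then 1 else 0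
def Phi1 : Fin 2 × Fin 2 → ℂ := fun k => if k = (0, 0) then 1 else if k = (1, 1) then -1 else 0
def Psi0 : Fin 2 × Fin 2 → ℂ := fun k => if k = (0, 1) ∨ k = (1, 0) then 1 else 0
def Psi1 : Fin 2 × Fin 2 → ℂ := fun k => if k = (0, 1) then 1 else if k = (1, 0) then -1 else 0

lemma phiPlus_eq : phiPlus = ((Real.sqrt 2 : ℂ))⁻¹ • Phi0 := by
  funext k; by_cases h : k = (0,0) ∨ k = (1,1) <;> simp [phiPlus, Phi0, h]
lemma phiMinus_eq : phiMinus = ((Real.sqrt 2 : ℂ))⁻¹ • Phi1 := by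
  funext k
  by_cases h1 : k = (0,0) <;> by_cases h2 : k = (1,1) <;> simp [phiMinus, Phi1, h1, h2]
lemma psiPlus_eq : psiPlus = ((Real.sqrt 2 : ℂ))⁻¹ • Psi0 := by
  funext k; by_cases h : k = (0,1) ∨ k = (1,0) <;> simp [psiPlus, Psi0, h]
lemma psiMinus_eq : psiMinus = ((Real.sqrt 2 : ℂ))⁻¹ • Psi1 := by
  funext k
  by_cases h1 : k = (0,1) <;> by_cases h2 : k = (1,0) <;> simp [psiMinus, Psi1, h1, h2]

lemma projv_phiPlus : projv phiPlus = (2⁻¹ : ℂ) • projv Phi0 := by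
  rw [phiPlus_eq, projv_smul, conj_c2, c2_mul_c2]
lemma projv_phiMinus : projv phiMinus = (2⁻¹ : ℂ) • projv Phi1 := by
  rw [phiMinus_eq, projv_smul, conj_c2, c2_mul_c2]
lemma projv_psiPlus : projv psiPlus = (2⁻¹ : ℂ) • projv Psi0 := by
  rw [psiPlus_eq, projv_smul, conj_c2, c2_mul_c2]
lemma projv_psiMinus : projv psiMinus = (2⁻¹ : ℂ) • projv Psi1 := by
  rw [psiMinus_eq, projv_smul, conj_c2, c2_mul_c2]

/-- Twice the three `Φ⁺`-containing octahedron vertices. -/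
lemma identity_A :
    projv b0 ⊗ₖ projv b0 + projv b1 ⊗ₖ projv b1
      + (projv up ⊗ₖ projv up + projv um ⊗ₖ projv um)
      + (projv vp ⊗ₖ projv vm + projv vm ⊗ₖ projv vp)
    = (3 : ℝ) • projv phiPlus + (projv phiMinus + projv psiPlus + projv psiMinus) := by
  rw [projv_up, projv_um, projv_vp, projv_vm, projv_phiPlus, projv_phiMinus,
    projv_psiPlus, projv_psiMinus, Matrix.smul_kronecker, Matrix.kronecker_smul,
    Matrix.smul_kronecker, Matrix.kronecker_smul, Matrix.smul_kronecker,
    Matrix.kronecker_smul, Matrix.smul_kronecker, Matrix.kronecker_smul]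
  ext ⟨i, j⟩ ⟨k, l⟩
  simp only [Matrix.add_apply, Matrix.smul_apply, projv, Matrix.vecMulVec_apply, Matrix.kroneckerMap_apply]
  fin_cases i <;> fin_cases j <;> fin_cases k <;> fin_cases l <;>
    simp [projv, Matrix.vecMulVec_apply, Matrix.kroneckerMap_apply, b0, b1, wp, wm, jp, jm,
      Phi0, Phi1, Psi0, Psi1, Prod.ext_iff, Complex.ext_iff] <;> norm_num

/-- Twice the three `Φ⁺`-free octahedron vertices. -/
lemma identity_B :
    projv b0 ⊗ₖ projv b1 + projv b1 ⊗ₖ projv b0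
      + (projv up ⊗ₖ projv um + projv um ⊗ₖ projv up)
      + (projv vp ⊗ₖ projv vp + projv vm ⊗ₖ projv vm)
    = (2 : ℝ) • (projv phiMinus + projv psiPlus + projv psiMinus) := by
  rw [projv_up, projv_um, projv_vp, projv_vm, projv_phiMinus,
    projv_psiPlus, projv_psiMinus, Matrix.smul_kronecker, Matrix.kronecker_smul,
    Matrix.smul_kronecker, Matrix.kronecker_smul, Matrix.smul_kronecker,
    Matrix.kronecker_smul, Matrix.smul_kronecker, Matrix.kronecker_smul]
  ext ⟨i, j⟩ ⟨k, l⟩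
  simp only [Matrix.add_apply, Matrix.smul_apply, projv, Matrix.vecMulVec_apply, Matrix.kroneckerMap_apply]
  fin_cases i <;> fin_cases j <;> fin_cases k <;> fin_cases l <;>
    simp [projv, Matrix.vecMulVec_apply, Matrix.kroneckerMap_apply, b0, b1, wp, wm, jp, jm,
      Phi1, Psi0, Psi1, Prod.ext_iff, Complex.ext_iff] <;> norm_num

/-! #### The Bell-diagonal normal form of `σ⁰` -/

/-- The (unnormalized) `Φ⁺` weight of `σ⁰`. -/
def cPw (fS η1 η2 n1 n2 : ℝ) : ℝ :=
  fS * aco η1 η2 n1 n2 - fS * cco η1 η2 n1 n2 + cco η1 η2 n1 n2 / 2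

/-- The (unnormalized) common weight of `Φ⁻`, `Ψ⁺`, `Ψ⁻` in `σ⁰`. -/
def cSw (fS η1 η2 n1 n2 : ℝ) : ℝ :=
  (1 / 2) * (fS * cco η1 η2 n1 n2
    + ((1 - fS) / 3) * (2 * aco η1 η2 n1 n2 + cco η1 η2 n1 n2))

lemma coe_smul_mat (r : ℝ) (M : Matrix (Fin 2 × Fin 2) (Fin 2 × Fin 2) ℂ) :
    ((r : ℂ)) • M = r • M := by
  ext i j; simp [Matrix.smul_apply, Complex.real_smul]

lemma cPw_add_three_cSw (fS η1 η2 n1 n2 : ℝ) :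
    cPw fS η1 η2 n1 n2 + 3 * cSw fS η1 η2 n1 n2 = aco η1 η2 n1 n2 + cco η1 η2 n1 n2 := by
  simp only [cPw, cSw]; ring

lemma cPw_nonneg {fS η1 η2 n1 n2 : ℝ} (hfS : 0 ≤ fS ∧ fS ≤ 1)
    (hη1 : 0 ≤ η1 ∧ η1 ≤ 1) (hη2 : 0 ≤ η2 ∧ η2 ≤ 1)
    (hn1 : 0 ≤ n1 ∧ n1 ≤ 1) (hn2 : 0 ≤ n2 ∧ n2 ≤ 1) : 0 ≤ cPw fS η1 η2 n1 n2 := by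
  have h1 : 0 ≤ fS * (2 * aco η1 η2 n1 n2 - cco η1 η2 n1 n2) :=
    mul_nonneg hfS.1 (by linarith [cco_le_two_aco hη1 hη2 hn1 hn2])
  have h2 : 0 ≤ (1 - fS) * cco η1 η2 n1 n2 :=
    mul_nonneg (by linarith [hfS.2]) (cco_nonneg hη1 hη2 hn1 hn2)
  simp only [cPw]
  nlinarith [h1, h2]

lemma cSw_nonneg {fS η1 η2 n1 n2 : ℝ} (hfS : 0 ≤ fS ∧ fS ≤ 1)
    (hη1 : 0 ≤ η1 ∧ η1 ≤ 1) (hη2 : 0 ≤ η2 ∧ η2 ≤ 1)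
    (hn1 : 0 ≤ n1 ∧ n1 ≤ 1) (hn2 : 0 ≤ n2 ∧ n2 ≤ 1) : 0 ≤ cSw fS η1 η2 n1 n2 := by
  have ha := aco_nonneg hη1 hη2 hn1 hn2
  have hc := cco_nonneg hη1 hη2 hn1 hn2
  simp only [cSw]
  nlinarith [mul_nonneg hfS.1 hc, mul_nonneg (by linarith [hfS.2] : (0:ℝ) ≤ 1 - fS) ha,
    mul_nonneg (by linarith [hfS.2] : (0:ℝ) ≤ 1 - fS) hc]

lemma sigma0_eq (fS η1 η2 n1 n2 : ℝ) :
    sigma0 fS η1 η2 n1 n2 =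
      ((aco η1 η2 n1 n2 + cco η1 η2 n1 n2)⁻¹ * cPw fS η1 η2 n1 n2) • projv phiPlus
      + ((aco η1 η2 n1 n2 + cco η1 η2 n1 n2)⁻¹ * cSw fS η1 η2 n1 n2) •
          (projv phiMinus + projv psiPlus + projv psiMinus) := by
  simp only [sigma0, coe_smul_mat]
  match_scalars <;>
    · simp only [cPw, cSw, bco_eq]
      push_cast
      ring

lemma fid_sigma0 (fS η1 η2 n1 n2 : ℝ) :
    fidTo phiPlus (sigma0 fS η1 η2 n1 n2) =
      (((aco η1 η2 n1 n2 + cco η1 η2 n1 n2)⁻¹ * cPw fS η1 η2 n1 n2 : ℝ) : ℂ) := by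
  rw [sigma0_eq]
  rw [fidTo_add, fidTo_real_smul, fidTo_real_smul, fidTo_add, fidTo_add,
    fidTo_projv, fidTo_projv, fidTo_projv, fidTo_projv,
    inner_pp, inner_pm, inner_mp, inner_pq, inner_qp, inner_pr, inner_rp]
  push_cast
  ring

lemma fid_sigma0_re (fS η1 η2 n1 n2 : ℝ) :
    (fidTo phiPlus (sigma0 fS η1 η2 n1 n2)).re =
      (aco η1 η2 n1 n2 + cco η1 η2 n1 n2)⁻¹ * cPw fS η1 η2 n1 n2 := by
  rw [fid_sigma0, Complex.ofReal_re]

/-! #### Separability of `σ⁰` when the `Φ⁺` weight is at most `1/2` -/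

lemma sigma0_separable {fS η1 η2 n1 n2 : ℝ} (hfS : 0 ≤ fS ∧ fS ≤ 1)
    (hη1 : 0 ≤ η1 ∧ η1 ≤ 1) (hη2 : 0 ≤ η2 ∧ η2 ≤ 1)
    (hn1 : 0 ≤ n1 ∧ n1 ≤ 1) (hn2 : 0 ≤ n2 ∧ n2 ≤ 1)
    (hac : 0 < aco η1 η2 n1 n2 + cco η1 η2 n1 n2)
    (hD : 2 * cPw fS η1 η2 n1 n2 ≤ aco η1 η2 n1 n2 + cco η1 η2 n1 n2) :
    Separable (sigma0 fS η1 η2 n1 n2) := by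
  set Sset := {M : Matrix (Fin 2 × Fin 2) (Fin 2 × Fin 2) ℂ |
    ∃ ρ τ : Matrix (Fin 2) (Fin 2) ℂ,
      IsDensityMatrix ρ ∧ IsDensityMatrix τ ∧ M = ρ ⊗ₖ τ} with hSset
  have hC := convex_convexHull ℝ Sset
  have hhalf : ∀ u1 v1 u2 v2 : Fin 2 → ℂ, IsDensityMatrix (projv u1) →
      IsDensityMatrix (projv v1) → IsDensityMatrix (projv u2) → IsDensityMatrix (projv v2) →
      ((2⁻¹ : ℝ) • (projv u1 ⊗ₖ projv v1) + (2⁻¹ : ℝ) • (projv u2 ⊗ₖ projv v2))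
        ∈ convexHull ℝ Sset := by
    intro u1 v1 u2 v2 h1 h2 h3 h4
    exact hC (subset_convexHull ℝ Sset ⟨_, _, h1, h2, rfl⟩)
      (subset_convexHull ℝ Sset ⟨_, _, h3, h4, rfl⟩)
      (by norm_num) (by norm_num) (by norm_num)
  have m0 := hhalf _ _ _ _ dm_b0 dm_b0 dm_b1 dm_b1
  have m1 := hhalf _ _ _ _ dm_up dm_up dm_um dm_um
  have m2 := hhalf _ _ _ _ dm_vp dm_vm dm_vm dm_vp
  have m3 := hhalf _ _ _ _ dm_b0 dm_b1 dm_b1 dm_b0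
  have m4 := hhalf _ _ _ _ dm_up dm_um dm_um dm_up
  have m5 := hhalf _ _ _ _ dm_vp dm_vp dm_vm dm_vm
  have g1 := hC (hC m0 m1 (by norm_num) (by norm_num) (by norm_num : (1/2 : ℝ) + 1/2 = 1)) m2
    (by norm_num) (by norm_num) (by norm_num : (2/3 : ℝ) + 1/3 = 1)
  have g2 := hC (hC m3 m4 (by norm_num) (by norm_num) (by norm_num : (1/2 : ℝ) + 1/2 = 1)) m5
    (by norm_num) (by norm_num) (by norm_num : (2/3 : ℝ) + 1/3 = 1)
  set r : ℝ := (aco η1 η2 n1 n2 + cco η1 η2 n1 n2)⁻¹ with hr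
  have hrpos : 0 < r := inv_pos.mpr hac
  set w1 : ℝ := 2 * (r * cPw fS η1 η2 n1 n2) / 3 with hw1
  set w2 : ℝ := r * cSw fS η1 η2 n1 n2 - r * cPw fS η1 η2 n1 n2 / 3 with hw2
  have hcP := cPw_nonneg hfS hη1 hη2 hn1 hn2
  have hsum := cPw_add_three_cSw fS η1 η2 n1 n2
  have hw1nn : 0 ≤ w1 := by positivity
  have hw2nn : 0 ≤ w2 := by
    have h3 : 0 ≤ cSw fS η1 η2 n1 n2 - cPw fS η1 η2 n1 n2 / 3 := by
      have hd : 2 * cPw fS η1 η2 n1 n2 ≤ cPw fS η1 η2 n1 n2 + 3 * cSw fS η1 η2 n1 n2 := by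
        rw [hsum]; exact hD
      linarith
    have he : w2 = r * (cSw fS η1 η2 n1 n2 - cPw fS η1 η2 n1 n2 / 3) := by rw [hw2]; ring
    rw [he]
    exact mul_nonneg hrpos.le h3
  have hsum1 : 3 * w1 + 3 * w2 = 1 := by
    have : 3 * w1 + 3 * w2 = r * (cPw fS η1 η2 n1 n2 + 3 * cSw fS η1 η2 n1 n2) := by
      rw [hw1, hw2]; ring
    rw [this, hsum, hr]
    exact inv_mul_cancel₀ hac.ne'
  have hfin := hC g1 g2 (by positivity : (0:ℝ) ≤ 3 * w1) (by positivity : (0:ℝ) ≤ 3 * w2) hsum1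
  have hkey : sigma0 fS η1 η2 n1 n2 =
      (3 * w1) • ((2/3 : ℝ) •
          ((1/2 : ℝ) • ((2⁻¹ : ℝ) • (projv b0 ⊗ₖ projv b0) + (2⁻¹ : ℝ) • (projv b1 ⊗ₖ projv b1))
            + (1/2 : ℝ) • ((2⁻¹ : ℝ) • (projv up ⊗ₖ projv up) + (2⁻¹ : ℝ) • (projv um ⊗ₖ projv um)))
        + (1/3 : ℝ) • ((2⁻¹ : ℝ) • (projv vp ⊗ₖ projv vm) + (2⁻¹ : ℝ) • (projv vm ⊗ₖ projv vp)))
      + (3 * w2) • ((2/3 : ℝ) •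
          ((1/2 : ℝ) • ((2⁻¹ : ℝ) • (projv b0 ⊗ₖ projv b1) + (2⁻¹ : ℝ) • (projv b1 ⊗ₖ projv b0))
            + (1/2 : ℝ) • ((2⁻¹ : ℝ) • (projv up ⊗ₖ projv um) + (2⁻¹ : ℝ) • (projv um ⊗ₖ projv up)))
        + (1/3 : ℝ) • ((2⁻¹ : ℝ) • (projv vp ⊗ₖ projv vp) + (2⁻¹ : ℝ) • (projv vm ⊗ₖ projv vm))) := by
    rw [sigma0_eq]
    linear_combination (norm := module)
      (-(w1 / 2) : ℝ) • identity_A + (-(w2 / 2) : ℝ) • identity_B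
  show sigma0 fS η1 η2 n1 n2 ∈ convexHull ℝ Sset
  rw [hkey]
  exact hfin

/-- **Entanglement of the heralded satellite-to-ground state** (Proposition 5 of the
paper): `σ⁰` is entangled iff `f_S > 1/2` and
`2(f_S-1)a + (4f_S-1)b - (1+2f_S)c > 0`; moreover `⟨Φ⁺|σ⁰|Φ⁺⟩ > 1/2` iff the same
inequality holds. -/
theorem heralded_state_entanglement (fS η1 η2 n1 n2 : ℝ)
    (hfS : 0 ≤ fS ∧ fS ≤ 1) (hη1 : 0 ≤ η1 ∧ η1 ≤ 1) (hη2 : 0 ≤ η2 ∧ η2 ≤ 1)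
    (hn1 : 0 ≤ n1 ∧ n1 ≤ 1) (hn2 : 0 ≤ n2 ∧ n2 ≤ 1)
    (hac : 0 < aco η1 η2 n1 n2 + cco η1 η2 n1 n2) :
    (¬ Separable (sigma0 fS η1 η2 n1 n2) ↔
      (1 / 2 < fS ∧
        0 < 2 * (fS - 1) * aco η1 η2 n1 n2 + (4 * fS - 1) * bco η1 η2 n1 n2
              - (1 + 2 * fS) * cco η1 η2 n1 n2)) ∧
    (1 / 2 < (fidTo phiPlus (sigma0 fS η1 η2 n1 n2)).re ↔
      0 < 2 * (fS - 1) * aco η1 η2 n1 n2 + (4 * fS - 1) * bco η1 η2 n1 n2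
            - (1 + 2 * fS) * cco η1 η2 n1 n2) := by
  have ha := aco_nonneg hη1 hη2 hn1 hn2
  have hc := cco_nonneg hη1 hη2 hn1 hn2
  have hDeq : 2 * (fS - 1) * aco η1 η2 n1 n2 + (4 * fS - 1) * bco η1 η2 n1 n2
        - (1 + 2 * fS) * cco η1 η2 n1 n2
      = 3 * (2 * cPw fS η1 η2 n1 n2 - (aco η1 η2 n1 n2 + cco η1 η2 n1 n2)) := by
    rw [bco_eq]; simp only [cPw]; ring
  have hiff2 : (1 / 2 < (fidTo phiPlus (sigma0 fS η1 η2 n1 n2)).re ↔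
      0 < 2 * (fS - 1) * aco η1 η2 n1 n2 + (4 * fS - 1) * bco η1 η2 n1 n2
            - (1 + 2 * fS) * cco η1 η2 n1 n2) := by
    rw [fid_sigma0_re, inv_mul_eq_div, lt_div_iff₀ hac, hDeq]
    constructor <;> intro <;> linarith
  refine ⟨?_, hiff2⟩
  constructor
  · intro hns
    have hD : 0 < 2 * (fS - 1) * aco η1 η2 n1 n2 + (4 * fS - 1) * bco η1 η2 n1 n2
        - (1 + 2 * fS) * cco η1 η2 n1 n2 := by
      by_contra hle
      push_neg at hle
      rw [hDeq] at hle
      exact hns (sigma0_separable hfS hη1 hη2 hn1 hn2 hac (by linarith))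
    refine ⟨?_, hD⟩
    by_contra hf
    push_neg at hf
    have hD0 : 2 * (fS - 1) * aco η1 η2 n1 n2 + (4 * fS - 1) * bco η1 η2 n1 n2
        - (1 + 2 * fS) * cco η1 η2 n1 n2 ≤ 0 := by
      rw [hDeq]
      simp only [cPw]
      nlinarith [mul_nonneg (by linarith : (0:ℝ) ≤ 1 - 2 * fS) ha,
        mul_nonneg (by linarith [hfS.1] : (0:ℝ) ≤ 2 * fS) hc]
    linarith
  · rintro ⟨hf, hD⟩ hsep
    have h1 := sep_fid_le _ hsep
    have h2 := hiff2.mpr hD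
    linarith
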